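/- arXiv:2302.01732 — 3 statements merged into one kernel-verified Lean document; each statement's English description precedes it below -/
import Mathlib

section
/- In the scalar case n = 1, set δ = |K|·H_m and Δ = [Q*_M + (H_M/2)(σ + |a|)²]·2|K|/|a|, and suppose σ > σ₀ > 0 and ε* > 0 satisfy σ₀ + ε*Δ(7|a| + 2σ)/(2|a|) < σ. Then for every ε ∈ (0, ε*] and every solution θ̃ of the scalar extremum-seeking error system with |θ̃(0)| ≤ σ₀, one has |θ̃(t)| < |θ̃(0)| + εΔ < σ for t ∈ [0, ε], and |θ̃(t)| < e^{−δ(t−ε)}(|θ̃(0)| + 3εΔ/2) + εΔ(2|a| + σ)/|a| < σ for all t ≥ ε. -/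
/-!
Freeze the state at `x` over one dither period of length `ε`: the frozen vector field integrates
to `K H ε x`, and since the true state moves by at most `εΔ` during the period, the period map is
within `O(ε²)` of multiplication by `1 + K H ε ∈ [0, e^{-δε}]`. Iterating this contraction gives
exponential decay of `|θ̃(kε)|` up to an `O(ε)` residual, and a first-exit-time argument shows that
the trajectory never leaves the ball of radius `σ` on which all these estimates are valid.
-/

open Real Set MeasureTheory

theorem abs_sub_le_mul_of_hasDerivAt_of_abs_le {f : ℝ → ℝ → ℝ} {θ : ℝ → ℝ} {s t R C : ℝ}
    (hst : s ≤ t) (hθ : ∀ τ ∈ Icc s t, HasDerivAt θ (f τ (θ τ)) τ)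
    (hR : ∀ τ ∈ Icc s t, |θ τ| ≤ R) (hC : ∀ τ x, |x| ≤ R → |f τ x| ≤ C) :
    |θ t - θ s| ≤ C * (t - s) :=
  norm_image_sub_le_of_norm_deriv_le_segment' (fun τ hτ => (hθ τ hτ).hasDerivWithinAt)
    (fun τ hτ => hC τ _ (hR τ (Ico_subset_Icc_self hτ))) t (right_mem_Icc.2 hst)

theorem abs_sub_sub_integral_le {f : ℝ → ℝ → ℝ} {θ : ℝ → ℝ} {s ε R C L : ℝ}
    (hε : 0 ≤ ε) (hL0 : 0 ≤ L) (hf : Continuous (Function.uncurry f))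
    (hθ : ∀ t ∈ Icc s (s + ε), HasDerivAt θ (f t (θ t)) t)
    (hR : ∀ t ∈ Icc s (s + ε), |θ t| ≤ R)
    (hC : ∀ t x, |x| ≤ R → |f t x| ≤ C)
    (hL : ∀ t x y, |x| ≤ R → |y| ≤ R → |f t x - f t y| ≤ L * |x - y|) :
    |θ (s + ε) - θ s - ∫ t in s..s + ε, f t (θ s)| ≤ L * C * ε ^ 2 / 2 := by
  have hsε : s ≤ s + ε := by linarith
  have hθc : ContinuousOn θ (Icc s (s + ε)) := fun t ht => (hθ t ht).continuousAt.continuousWithinAt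
  have hint : IntervalIntegrable (fun t => f t (θ t)) volume s (s + ε) :=
    (hf.comp_continuousOn (continuousOn_id.prodMk hθc)).intervalIntegrable_of_Icc hsε
  have hint₀ : IntervalIntegrable (fun t => f t (θ s)) volume s (s + ε) :=
    (hf.comp (continuous_id.prodMk continuous_const)).intervalIntegrable _ _
  have hftc : ∫ t in s..s + ε, f t (θ t) = θ (s + ε) - θ s :=
    intervalIntegral.integral_eq_sub_of_hasDerivAt (fun t ht => hθ t (uIcc_of_le hsε ▸ ht)) hint
  have hpt : ∀ t ∈ Ioc s (s + ε), ‖f t (θ t) - f t (θ s)‖ ≤ L * C * (t - s) := fun t ht => by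
    have hspeed := abs_sub_le_mul_of_hasDerivAt_of_abs_le ht.1.le
      (fun τ hτ => hθ τ ⟨hτ.1, hτ.2.trans ht.2⟩) (fun τ hτ => hR τ ⟨hτ.1, hτ.2.trans ht.2⟩) hC
    calc ‖f t (θ t) - f t (θ s)‖ ≤ L * |θ t - θ s| :=
          hL t _ _ (hR t ⟨ht.1.le, ht.2⟩) (hR s (left_mem_Icc.2 hsε))
      _ ≤ L * (C * (t - s)) := by gcongr
      _ = L * C * (t - s) := by ring
  have hmajorant : ∫ t in s..s + ε, L * C * (t - s) = L * C * ε ^ 2 / 2 := by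
    simp only [intervalIntegral.integral_const_mul, intervalIntegral.intervalIntegrable_id,
      intervalIntegrable_const, intervalIntegral.integral_sub, integral_id,
      intervalIntegral.integral_const, add_sub_cancel_left, smul_eq_mul]
    ring
  rw [← hftc, ← intervalIntegral.integral_sub hint hint₀, ← Real.norm_eq_abs, ← hmajorant]
  exact intervalIntegral.norm_integral_le_of_norm_le hsε (Filter.Eventually.of_forall hpt)
    ((by fun_prop : Continuous fun t => L * C * (t - s)).intervalIntegrable _ _)

theorem sub_le_pow_mul_sub_of_le_mul_add {u : ℕ → ℝ} {r B : ℝ} {n : ℕ} (hr : 0 ≤ r)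
    (hu : ∀ k < n, u (k + 1) ≤ r * u k + (1 - r) * B) : u n - B ≤ r ^ n * (u 0 - B) := by
  induction n with
  | zero => simp
  | succ n ih =>
    have ih := ih fun k hk => hu k (hk.trans n.lt_succ_self)
    calc u (n + 1) - B ≤ r * (u n - B) := by linarith [hu n n.lt_succ_self]
      _ ≤ r * (r ^ n * (u 0 - B)) := by gcongr
      _ = r ^ (n + 1) * (u 0 - B) := by ring

theorem abs_le_pow_floor_mul_add_of_integral_eq {f : ℝ → ℝ → ℝ} {θ : ℝ → ℝ}
    {ε R C L r B t : ℝ} (hε : 0 < ε) (hL0 : 0 ≤ L) (hr : 0 ≤ r) (hB0 : 0 ≤ B)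
    (hB : L * C * ε ^ 2 / 2 ≤ (1 - r) * B) (hf : Continuous (Function.uncurry f))
    (havg : ∀ s x, ∫ τ in s..s + ε, f τ x = (r - 1) * x)
    (hC : ∀ τ x, |x| ≤ R → |f τ x| ≤ C)
    (hL : ∀ τ x y, |x| ≤ R → |y| ≤ R → |f τ x - f τ y| ≤ L * |x - y|)
    (ht : 0 ≤ t) (hθ : ∀ τ ∈ Icc 0 t, HasDerivAt θ (f τ (θ τ)) τ)
    (hR : ∀ τ ∈ Icc 0 t, |θ τ| ≤ R) :
    |θ t| ≤ r ^ ⌊t / ε⌋₊ * |θ 0| + B + C * ε := by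
  set n := ⌊t / ε⌋₊
  have hnt : n * ε ≤ t := (le_div_iff₀ hε).1 (Nat.floor_le (div_nonneg ht hε.le))
  have htn : t < (n + 1) * ε := (div_lt_iff₀ hε).1 (Nat.lt_floor_add_one _)
  have hC0 : 0 ≤ C := (abs_nonneg _).trans (hC 0 (θ 0) (hR 0 ⟨le_rfl, ht⟩))
  have hperiod : ∀ k < n, |θ ((k + 1 : ℕ) * ε)| ≤ r * |θ (k * ε)| + (1 - r) * B := by
    intro k hk
    have hsub : Icc (k * ε) (k * ε + ε) ⊆ Icc 0 t := by
      refine Icc_subset_Icc (by positivity) (le_trans ?_ hnt)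
      rw [← add_one_mul]
      gcongr
      exact_mod_cast hk
    have hwindow := abs_sub_sub_integral_le hε.le hL0 hf (fun τ hτ => hθ τ (hsub hτ))
      (fun τ hτ => hR τ (hsub hτ)) hC hL
    rw [havg] at hwindow
    calc |θ ((k + 1 : ℕ) * ε)|
        = |r * θ (k * ε) + (θ (k * ε + ε) - θ (k * ε) - (r - 1) * θ (k * ε))| := by
          push_cast; ring_nf
      _ ≤ |r * θ (k * ε)| + |θ (k * ε + ε) - θ (k * ε) - (r - 1) * θ (k * ε)| := abs_add_le _ _
      _ ≤ r * |θ (k * ε)| + (1 - r) * B := by rw [abs_mul, abs_of_nonneg hr]; linarith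
  have hgrid := sub_le_pow_mul_sub_of_le_mul_add (u := fun k : ℕ => |θ (k * ε)|) hr hperiod
  have hlast := abs_sub_le_mul_of_hasDerivAt_of_abs_le hnt
    (fun τ hτ => hθ τ ⟨(by positivity : (0 : ℝ) ≤ n * ε).trans hτ.1, hτ.2⟩)
    (fun τ hτ => hR τ ⟨(by positivity : (0 : ℝ) ≤ n * ε).trans hτ.1, hτ.2⟩) hC
  simp only [Nat.cast_zero, zero_mul] at hgrid
  have hrn : 0 ≤ r ^ n * B := by positivity
  have hCε : C * (t - n * ε) ≤ C * ε := by gcongr; linarith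
  linarith [abs_sub_abs_le_abs_sub (θ t) (θ (n * ε))]

theorem forall_lt_of_forall_le_imp_lt {g : ℝ → ℝ} {a c : ℝ} (hg : ContinuousOn g (Ici a))
    (ha : g a < c) (hstep : ∀ T ≥ a, (∀ t ∈ Icc a T, g t ≤ c) → g T < c) :
    ∀ t ≥ a, g t < c := by
  by_contra! ⟨t, hat, hct⟩
  have hcompact : IsCompact (Icc a t ∩ g ⁻¹' Ici c) :=
    isCompact_Icc.of_isClosed_subset
      ((hg.mono Icc_subset_Ici_self).preimage_isClosed_of_isClosed isClosed_Icc isClosed_Ici)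
      inter_subset_left
  obtain ⟨T, ⟨⟨haT, hTt⟩, hcT : c ≤ g T⟩, hleast⟩ :=
    hcompact.exists_isLeast ⟨t, ⟨hat, le_rfl⟩, hct⟩
  have haT' : a < T := haT.lt_of_ne (by rintro rfl; linarith)
  have hbelow : ∀ τ ∈ Ico a T, g τ ≤ c := fun τ hτ =>
    le_of_lt <| not_le.1 fun h => hτ.2.not_ge <| hleast ⟨⟨hτ.1, hτ.2.le.trans hTt⟩, h⟩
  have hcl : closure (Ico a T) = Icc a T := closure_Ico haT'.ne
  have hupto : ∀ τ ∈ Icc a T, g τ ≤ c := fun τ hτ =>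
    le_on_closure hbelow (hcl ▸ hg.mono Icc_subset_Ici_self) continuousOn_const (hcl ▸ hτ)
  exact (hstep T haT hupto).not_ge hcT

theorem pow_floor_div_le_exp {r δ ε t : ℝ} (hr0 : 0 ≤ r) (hr : r ≤ exp (-(δ * ε))) (hδ : 0 ≤ δ)
    (hε : 0 < ε) : r ^ ⌊t / ε⌋₊ ≤ exp (-δ * (t - ε)) := by
  have ht : t < (⌊t / ε⌋₊ + 1) * ε := (div_lt_iff₀ hε).1 (Nat.lt_floor_add_one _)
  calc r ^ ⌊t / ε⌋₊ ≤ exp (-(δ * ε)) ^ ⌊t / ε⌋₊ := by gcongr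
    _ = exp (⌊t / ε⌋₊ * -(δ * ε)) := (exp_nat_mul _ _).symm
    _ ≤ exp (-δ * (t - ε)) := exp_le_exp.2 (by nlinarith)

theorem one_add_mul_mul_le_exp {K H Hm ε : ℝ} (hK : K ≤ 0) (hε : 0 ≤ ε) (hH : Hm ≤ H) :
    1 + K * H * ε ≤ exp (-(|K| * Hm * ε)) := by
  have := mul_le_mul_of_nonneg_right (mul_le_mul_of_nonpos_left hH hK) hε
  rw [abs_of_nonpos hK]
  linarith [add_one_le_exp (-(-K * Hm * ε))]

theorem integral_sin_mul_quadratic_sin {c ε : ℝ} (l : ℤ) (hc : c ≠ 0) (hcε : c * ε = 2 * π * l)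
    (p q w s : ℝ) :
    ∫ t in s..s + ε, sin (c * t) * (p + q * sin (c * t) + w * sin (c * t) ^ 2) = q * ε / 2 := by
  let F : ℝ → ℝ := fun t => -p * cos (c * t) / c + q * (t / 2 - sin (2 * (c * t)) / (4 * c))
    + w * (cos (c * t) ^ 3 / 3 - cos (c * t)) / c
  have hF : ∀ t, HasDerivAt F (sin (c * t) * (p + q * sin (c * t) + w * sin (c * t) ^ 2)) t := by
    intro t
    have hlin : HasDerivAt (c * ·) c t := by simpa using (hasDerivAt_id t).const_mul c
    have hcos := hlin.cos
    have hsin := (hlin.const_mul 2).sin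
    have h₁ := (hcos.const_mul (-p)).div_const c
    have h₂ := (((hasDerivAt_id' t).div_const 2).sub (hsin.div_const (4 * c))).const_mul q
    have h₃ := ((((hcos.pow 3).div_const 3).sub hcos).const_mul w).div_const c
    refine ((h₁.add h₂).add h₃).congr_deriv ?_
    simp only [cos_two_mul, Nat.cast_ofNat, Nat.add_one_sub_one, cos_sq']
    field_simp
    ring
  have hperiod : c * (s + ε) = c * s + l * (2 * π) := by linear_combination hcε
  rw [intervalIntegral.integral_eq_sub_of_hasDerivAt (fun t _ => hF t)
    (Continuous.intervalIntegrable (by fun_prop) _ _)]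
  simp only [F, hperiod, mul_add, cos_add_int_mul_two_pi]
  rw [show 2 * (l * (2 * π)) = ((2 * l : ℤ) : ℝ) * (2 * π) by push_cast; ring,
    sin_add_int_mul_two_pi]
  field_simp
  ring

noncomputable def esField (K a H Qs ε : ℝ) (l : ℕ) (t x : ℝ) : ℝ :=
  K * (2 / a) * Real.sin (2 * π * l * t / ε)
    * (Qs + H / 2 * (x + a * Real.sin (2 * π * l * t / ε)) ^ 2)

noncomputable def esFieldBound (QM HM K a M : ℝ) : ℝ :=
  (QM + HM / 2 * (M + |a|) ^ 2) * (2 * |K| / |a|)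

section esField

variable {K a H Qs ε QM HM σ : ℝ} {l : ℕ} {θ : ℝ → ℝ}

theorem continuous_esField : Continuous (Function.uncurry (esField K a H Qs ε l)) := by
  unfold esField
  fun_prop

theorem abs_esField_le {M : ℝ} (hH0 : 0 ≤ H) (hHM : H ≤ HM) (hQ : |Qs| ≤ QM) (t : ℝ)
    {x : ℝ} (hx : |x| ≤ M) : |esField K a H Qs ε l t x| ≤ esFieldBound QM HM K a M := by
  set u := Real.sin (2 * π * l * t / ε)
  have hu : |u| ≤ 1 := abs_sin_le_one _
  have hgain : |K * (2 / a) * u| ≤ 2 * |K| / |a| := by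
    rw [abs_mul, abs_mul, abs_div, abs_two]
    calc |K| * (2 / |a|) * |u| ≤ |K| * (2 / |a|) * 1 := by gcongr
      _ = 2 * |K| / |a| := by ring
  have hshift : (x + a * u) ^ 2 ≤ (M + |a|) ^ 2 := by
    rw [← sq_abs]
    gcongr
    calc |x + a * u| ≤ |x| + |a| * |u| := (abs_add_le _ _).trans_eq (by rw [abs_mul])
      _ ≤ M + |a| * 1 := by gcongr
      _ = M + |a| := by ring
  have hcost : |Qs + H / 2 * (x + a * u) ^ 2| ≤ QM + HM / 2 * (M + |a|) ^ 2 := by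
    have hquad : 0 ≤ H / 2 * (x + a * u) ^ 2 := by positivity
    calc |Qs + H / 2 * (x + a * u) ^ 2| ≤ |Qs| + H / 2 * (x + a * u) ^ 2 :=
          (abs_add_le _ _).trans_eq (by rw [abs_of_nonneg hquad])
      _ ≤ QM + HM / 2 * (M + |a|) ^ 2 := by have := hH0.trans hHM; gcongr
  calc |esField K a H Qs ε l t x| = |K * (2 / a) * u| * |Qs + H / 2 * (x + a * u) ^ 2| :=
        abs_mul _ _
    _ ≤ 2 * |K| / |a| * (QM + HM / 2 * (M + |a|) ^ 2) := by gcongr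
    _ = esFieldBound QM HM K a M := mul_comm _ _

theorem abs_esField_sub_le {R : ℝ} (hH0 : 0 ≤ H) (t : ℝ) {x y : ℝ} (hx : |x| ≤ R)
    (hy : |y| ≤ R) :
    |esField K a H Qs ε l t x - esField K a H Qs ε l t y|
      ≤ 2 * |K| * H * (R + |a|) / |a| * |x - y| := by
  unfold esField
  set u := Real.sin (2 * π * l * t / ε)
  have hu : |u| ≤ 1 := abs_sin_le_one _
  have hgain : |K * (2 / a) * u * (H / 2)| ≤ |K| * H / |a| := by
    rw [abs_mul, abs_mul, abs_mul, abs_div, abs_two, abs_of_nonneg (by positivity : 0 ≤ H / 2)]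
    calc |K| * (2 / |a|) * |u| * (H / 2) ≤ |K| * (2 / |a|) * 1 * (H / 2) := by gcongr
      _ = |K| * H / |a| := by ring
  have hsum : |x + y + 2 * a * u| ≤ 2 * (R + |a|) := by
    calc |x + y + 2 * a * u| ≤ |x| + |y| + 2 * |a| * |u| := by
          refine (abs_add_le _ _).trans ?_
          rw [abs_mul, abs_mul, abs_two]
          gcongr
          exact abs_add_le _ _
      _ ≤ R + R + 2 * |a| * 1 := by gcongr
      _ = 2 * (R + |a|) := by ring
  calc |K * (2 / a) * u * (Qs + H / 2 * (x + a * u) ^ 2)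
        - K * (2 / a) * u * (Qs + H / 2 * (y + a * u) ^ 2)|
      = |K * (2 / a) * u * (H / 2)| * |x + y + 2 * a * u| * |x - y| := by
        rw [← abs_mul, ← abs_mul]
        ring_nf
    _ ≤ |K| * H / |a| * (2 * (R + |a|)) * |x - y| := by gcongr
    _ = 2 * |K| * H * (R + |a|) / |a| * |x - y| := by ring

theorem integral_esField (ha : a ≠ 0) (hε : ε ≠ 0) (hl : l ≠ 0) (s x : ℝ) :
    ∫ t in s..s + ε, esField K a H Qs ε l t x = K * H * ε * x := by
  set c := 2 * π * l / ε
  have hc : c ≠ 0 := by positivity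
  have hcε : c * ε = 2 * π * ((l : ℤ) : ℝ) := by push_cast; exact div_mul_cancel₀ _ hε
  have hfield : ∀ t, esField K a H Qs ε l t x = K * (2 / a) * (Real.sin (c * t)
      * ((Qs + H / 2 * x ^ 2) + H * a * x * Real.sin (c * t)
        + H / 2 * a ^ 2 * Real.sin (c * t) ^ 2)) := fun t => by
    rw [esField, show 2 * π * l * t / ε = c * t by ring]
    ring
  simp only [hfield, intervalIntegral.integral_const_mul, integral_sin_mul_quadratic_sin l hc hcε]
  field_simp

theorem esFieldBound_nonneg {M : ℝ} (hQM : 0 ≤ QM) (hHM : 0 ≤ HM) :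
    0 ≤ esFieldBound QM HM K a M := by
  unfold esFieldBound
  positivity

theorem esFieldBound_pos {M : ℝ} (hQM : 0 ≤ QM) (hHM : 0 < HM) (hK : K ≠ 0) (ha : a ≠ 0)
    (hM : 0 ≤ M) : 0 < esFieldBound QM HM K a M := by
  unfold esFieldBound
  positivity

theorem esFieldBound_lt_esFieldBound {M N : ℝ} (hHM : 0 < HM) (hK : K ≠ 0) (ha : a ≠ 0)
    (hM : 0 ≤ M) (hMN : M < N) : esFieldBound QM HM K a M < esFieldBound QM HM K a N := by
  unfold esFieldBound
  gcongr

theorem one_add_mul_nonneg_of_mul_esFieldBound_le (ha : a ≠ 0)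
    (hK : K ≤ 0) (hε : 0 ≤ ε) (hQM : 0 ≤ QM) (hHM : H ≤ HM) (hσ : 0 ≤ σ)
    (hsmall : ε * esFieldBound QM HM K a σ ≤ σ) : 0 ≤ 1 + K * H * ε := by
  have hA : 0 < |a| := abs_pos.2 ha
  have hP : 0 < (σ + |a|) ^ 2 := by positivity
  have hεK : 0 ≤ ε * -K := mul_nonneg hε (neg_nonneg.2 hK)
  have h₁ : ε * (-K) * HM * (σ + |a|) ^ 2 ≤ σ * |a| := by
    rw [esFieldBound, abs_of_nonpos hK] at hsmall
    have hclear : ε * ((QM + HM / 2 * (σ + |a|) ^ 2) * (2 * -K / |a|)) * |a|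
        = 2 * (ε * -K) * QM + ε * (-K) * HM * (σ + |a|) ^ 2 := by field_simp; ring
    nlinarith [mul_le_mul_of_nonneg_right hsmall hA.le, mul_nonneg hεK hQM]
  have h₂ : ε * (-K) * HM ≤ 1 := by
    rw [← mul_le_mul_iff_of_pos_right hP]
    nlinarith
  have h₃ : ε * (-K) * H ≤ ε * (-K) * HM := by gcongr
  linarith

theorem abs_le_of_hasDerivAt_esField {t : ℝ} (ha : a ≠ 0) (hK : K ≤ 0) (hl : l ≠ 0) (hε : 0 < ε)
    (hH0 : 0 ≤ H) (hHM : H ≤ HM) (hQ : |Qs| ≤ QM) (hσ : 0 ≤ σ) (hr : 0 ≤ 1 + K * H * ε)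
    (ht : 0 ≤ t)
    (hθ : ∀ τ ∈ Icc 0 t, HasDerivAt θ (esField K a H Qs ε l τ (θ τ)) τ)
    (hR : ∀ τ ∈ Icc 0 t, |θ τ| ≤ σ) :
    |θ t| ≤ (1 + K * H * ε) ^ ⌊t / ε⌋₊ * |θ 0|
      + ε * esFieldBound QM HM K a σ * (2 * |a| + σ) / |a| := by
  have hQM : 0 ≤ QM := (abs_nonneg Qs).trans hQ
  have hΔ := esFieldBound_nonneg (K := K) (a := a) (M := σ) hQM (hH0.trans hHM)
  refine (abs_le_pow_floor_mul_add_of_integral_eq (L := 2 * |K| * H * (σ + |a|) / |a|)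
    (B := ε * esFieldBound QM HM K a σ * (σ + |a|) / |a|) hε (by positivity) hr (by positivity)
    (le_of_eq ?_) continuous_esField (fun s x => by rw [integral_esField ha hε.ne' hl]; ring)
    (fun τ x hx => abs_esField_le hH0 hHM hQ τ hx)
    (fun τ x y hx hy => abs_esField_sub_le hH0 τ hx hy)
    ht hθ hR).trans_eq ?_
  · rw [abs_of_nonpos hK]
    ring
  · field_simp
    ring

theorem abs_lt_of_hasDerivAt_esField (ha : a ≠ 0) (hK : K ≤ 0) (hl : l ≠ 0) (hε : 0 < ε)
    (hH0 : 0 ≤ H) (hHM : H ≤ HM) (hQ : |Qs| ≤ QM) (hσ : 0 ≤ σ) (hr : 0 ≤ 1 + K * H * ε)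
    (hθ : ∀ t ≥ 0, HasDerivAt θ (esField K a H Qs ε l t (θ t)) t)
    (hsmall : |θ 0| + ε * esFieldBound QM HM K a σ * (2 * |a| + σ) / |a| < σ) :
    ∀ t ≥ 0, |θ t| < σ := by
  have hr1 : 1 + K * H * ε ≤ 1 := by
    have := mul_nonneg (mul_nonneg (neg_nonneg.2 hK) hH0) hε.le
    linarith
  have hW : 0 ≤ ε * esFieldBound QM HM K a σ * (2 * |a| + σ) / |a| := by
    have := esFieldBound_nonneg (K := K) (a := a) (M := σ) ((abs_nonneg Qs).trans hQ)
      (hH0.trans hHM)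
    positivity
  refine forall_lt_of_forall_le_imp_lt (fun t ht => (hθ t ht).continuousAt.continuousWithinAt.abs)
    (by linarith) fun T hT hR => ?_
  have := mul_le_of_le_one_left (abs_nonneg (θ 0)) (pow_le_one₀ hr hr1 (n := ⌊T / ε⌋₊))
  linarith [abs_le_of_hasDerivAt_esField ha hK hl hε hH0 hHM hQ hσ hr hT
    (fun τ hτ => hθ τ hτ.1) hR]

theorem abs_lt_add_of_hasDerivAt_esField {t : ℝ} (ha : a ≠ 0) (hK : K ≠ 0) (hε : 0 < ε)
    (hH0 : 0 ≤ H) (hHM : H ≤ HM) (hHM0 : 0 < HM) (hQ : |Qs| ≤ QM)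
    (hθ : ∀ τ ∈ Icc 0 t, HasDerivAt θ (esField K a H Qs ε l τ (θ τ)) τ)
    (hR : ∀ τ ∈ Icc 0 t, |θ τ| ≤ σ) (hsmall : |θ 0| + ε * esFieldBound QM HM K a σ < σ)
    (ht : t ∈ Icc 0 ε) : |θ t| < |θ 0| + ε * esFieldBound QM HM K a σ := by
  set M := |θ 0| + ε * esFieldBound QM HM K a σ
  have hQM : 0 ≤ QM := (abs_nonneg Qs).trans hQ
  have hspeed : ∀ R, ∀ τ ∈ Icc 0 t, (∀ ρ ∈ Icc 0 τ, |θ ρ| ≤ R) →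
      |θ τ - θ 0| ≤ esFieldBound QM HM K a R * (τ - 0) := fun R τ hτ hτR =>
    abs_sub_le_mul_of_hasDerivAt_of_abs_le hτ.1
      (fun ρ hρ => hθ ρ ⟨hρ.1, hρ.2.trans hτ.2⟩) hτR
      (fun ρ x hx => abs_esField_le hH0 hHM hQ ρ hx)
  -- a first pass with the crude bound `σ` confines `θ` to the smaller ball of radius `M`
  have hnear : ∀ τ ∈ Icc 0 t, |θ τ| ≤ M := fun τ hτ => by
    have := hspeed σ τ hτ fun ρ hρ => hR ρ ⟨hρ.1, hρ.2.trans hτ.2⟩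
    have := mul_le_mul_of_nonneg_left (hτ.2.trans ht.2)
      (esFieldBound_nonneg (K := K) (a := a) (M := σ) hQM hHM0.le)
    linarith [abs_sub_abs_le_abs_sub (θ τ) (θ 0)]
  have hM : 0 ≤ M := (abs_nonneg _).trans (hnear 0 ⟨le_rfl, ht.1⟩)
  have hslow := hspeed M t (right_mem_Icc.2 ht.1) fun ρ hρ => hnear ρ hρ
  have := mul_le_mul_of_nonneg_left ht.2
    (esFieldBound_nonneg (K := K) (a := a) (M := M) hQM hHM0.le)
  have := mul_lt_mul_of_pos_right
    (esFieldBound_lt_esFieldBound (QM := QM) hHM0 hK ha hM hsmall) hε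
  linarith [abs_sub_abs_le_abs_sub (θ t) (θ 0)]

theorem abs_lt_exp_mul_add_of_hasDerivAt_esField {Hm t : ℝ} (ha : a ≠ 0) (hK : K < 0)
    (hl : l ≠ 0) (hε : 0 < ε) (hHm : 0 < Hm) (hHmH : Hm ≤ H) (hHM : H ≤ HM) (hQ : |Qs| ≤ QM)
    (hσ : 0 ≤ σ) (hr : 0 ≤ 1 + K * H * ε) (ht : ε ≤ t)
    (hθ : ∀ τ ∈ Icc 0 t, HasDerivAt θ (esField K a H Qs ε l τ (θ τ)) τ)
    (hR : ∀ τ ∈ Icc 0 t, |θ τ| ≤ σ) :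
    |θ t| < exp (-(|K| * Hm) * (t - ε)) * (|θ 0| + 3 * ε * esFieldBound QM HM K a σ / 2)
      + ε * esFieldBound QM HM K a σ * (2 * |a| + σ) / |a| := by
  have hH0 : 0 ≤ H := hHm.le.trans hHmH
  have hΔ : 0 < esFieldBound QM HM K a σ :=
    esFieldBound_pos ((abs_nonneg Qs).trans hQ) (hHm.trans_le (hHmH.trans hHM)) hK.ne ha hσ
  have hdecay := pow_floor_div_le_exp (t := t) hr (one_add_mul_mul_le_exp hK.le hε.le hHmH)
    (by positivity) hε
  have := mul_le_mul_of_nonneg_right hdecay (abs_nonneg (θ 0))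
  have := mul_pos (exp_pos (-(|K| * Hm) * (t - ε)))
    (by positivity : 0 < 3 * ε * esFieldBound QM HM K a σ / 2)
  rw [mul_add]
  linarith [abs_le_of_hasDerivAt_esField ha hK.le hl hε hH0 hHM hQ hσ hr (hε.le.trans ht) hθ hR]

end esField

theorem continuous_ES_practical_stability_scalar_general
    -- tuning parameters
    (a K : ℝ) (l : ℕ) (ha : a ≠ 0) (hK : K < 0) (hl : 0 < l)
    -- the unknown Hessian
    (H Hm HM : ℝ) (hHm : 0 < Hm) (hH : H ∈ Set.Icc Hm HM)
    -- the extremum value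
    (Qs QM : ℝ) (hQM : 0 ≤ QM) (hQ : |Qs| ≤ QM)
    -- the constants δ and Δ
    (σ σ0 εstar δ Δ : ℝ)
    (hδ : δ = |K| * Hm)
    (hΔ : Δ = (QM + HM / 2 * (σ + |a|) ^ 2) * (2 * |K| / |a|))
    (hσ0 : 0 < σ0) (hσ : σ0 < σ)
    (hΦ : σ0 + εstar * Δ * (7 * |a| + 2 * σ) / (2 * |a|) < σ)
    -- a solution of the scalar ES error system for some ε ∈ (0, ε*]
    (ε : ℝ) (hε : ε ∈ Set.Ioc 0 εstar)
    (θ : ℝ → ℝ) (hθ0 : |θ 0| ≤ σ0)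
    (hode : ∀ t ≥ (0 : ℝ), HasDerivAt θ
      (K * (2 / a) * Real.sin (2 * π * l * t / ε)
        * (Qs + H / 2 * (θ t + a * Real.sin (2 * π * l * t / ε)) ^ 2)) t) :
    (∀ t ∈ Set.Icc (0 : ℝ) ε,
        |θ t| < |θ 0| + ε * Δ ∧ |θ 0| + ε * Δ < σ) ∧
    (∀ t ≥ ε,
        |θ t| < Real.exp (-δ * (t - ε)) * (|θ 0| + 3 * ε * Δ / 2)
            + ε * Δ * (2 * |a| + σ) / |a| ∧
        Real.exp (-δ * (t - ε)) * (|θ 0| + 3 * ε * Δ / 2)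
            + ε * Δ * (2 * |a| + σ) / |a| < σ) := by
  obtain ⟨hε0, hεle⟩ := hε
  obtain ⟨hHmH, hHHM⟩ := hH
  have hH0 : 0 ≤ H := hHm.le.trans hHmH
  have hHM0 : 0 < HM := hHm.trans_le (hHmH.trans hHHM)
  have hσpos : 0 < σ := hσ0.trans hσ
  have hΔ' : Δ = esFieldBound QM HM K a σ := hΔ
  have hΔpos : 0 < Δ :=
    hΔ' ▸ esFieldBound_pos hQM hHM0 hK.ne ha hσpos.le
  have hsmall : σ0 + 3 * ε * Δ / 2 + ε * Δ * (2 * |a| + σ) / |a| < σ := by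
    have hsplit : ε * Δ * (7 * |a| + 2 * σ) / (2 * |a|)
        = 3 * ε * Δ / 2 + ε * Δ * (2 * |a| + σ) / |a| := by field_simp; ring
    have : ε * Δ * (7 * |a| + 2 * σ) / (2 * |a|) ≤ εstar * Δ * (7 * |a| + 2 * σ) / (2 * |a|) := by
      gcongr
    linarith
  have hεΔ : 0 < ε * Δ := mul_pos hε0 hΔpos
  have hW : 0 ≤ ε * Δ * (2 * |a| + σ) / |a| := by positivity
  have hr : 0 ≤ 1 + K * H * ε := one_add_mul_nonneg_of_mul_esFieldBound_le ha hK.le hε0.le hQM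
    hHHM hσpos.le (by rw [← hΔ']; linarith)
  have hglobal : ∀ t ≥ 0, |θ t| < σ := abs_lt_of_hasDerivAt_esField ha hK.le hl.ne' hε0 hH0 hHHM
    hQ hσpos.le hr hode (by rw [← hΔ']; linarith)
  refine ⟨fun t ht => ?_, fun t ht => ?_⟩
  · have hM : |θ 0| + ε * Δ < σ := by linarith
    exact ⟨hΔ' ▸ abs_lt_add_of_hasDerivAt_esField ha hK.ne hε0 hH0 hHHM hHM0 hQ
      (fun τ hτ => hode τ hτ.1) (fun τ hτ => (hglobal τ hτ.1).le) (hΔ' ▸ hM) ht, hM⟩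
  · have hexp : exp (-δ * (t - ε)) ≤ 1 := exp_le_one_iff.2 <| by
      rw [hδ]; nlinarith [mul_pos (abs_pos.2 hK.ne) hHm]
    have hX : 0 < |θ 0| + 3 * ε * Δ / 2 := by positivity
    refine ⟨hδ ▸ hΔ' ▸ abs_lt_exp_mul_add_of_hasDerivAt_esField ha hK hl.ne' hε0 hHm hHmH hHHM hQ
      hσpos.le hr ht (fun τ hτ => hode τ hτ.1) (fun τ hτ => (hglobal τ hτ.1).le), ?_⟩
    nlinarith [mul_le_mul_of_nonneg_right hexp hX.le]

/-- Remark 3, scalar continuous-time ES. -/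
theorem continuous_ES_practical_stability_scalar
    -- tuning parameters
    (a K : ℝ) (l : ℕ) (ha : a ≠ 0) (hK : K < 0) (hl : 0 < l)
    -- the unknown Hessian
    (H Hm HM : ℝ) (hHm : 0 < Hm) (hH : H ∈ Set.Icc Hm HM)
    -- the extremum value
    (Qs QM : ℝ) (hQM : 0 ≤ QM) (hQ : |Qs| ≤ QM)
    -- the constants δ and Δ
    (σ σ0 εstar δ Δ : ℝ)
    (hδ : δ = |K| * Hm)
    (hΔ : Δ = (QM + HM / 2 * (σ + |a|) ^ 2) * (2 * |K| / |a|))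
    (hσ0 : 0 < σ0) (hσ : σ0 < σ) (hεstar : 0 < εstar)
    (hΦ : σ0 + εstar * Δ * (7 * |a| + 2 * σ) / (2 * |a|) < σ)
    -- a solution of the scalar ES error system for some ε ∈ (0, ε*]
    (ε : ℝ) (hε : ε ∈ Set.Ioc 0 εstar)
    (θ : ℝ → ℝ) (hθ0 : |θ 0| ≤ σ0)
    (hode : ∀ t ≥ (0 : ℝ), HasDerivAt θ
      (K * (2 / a) * Real.sin (2 * π * l * t / ε)
        * (Qs + H / 2 * (θ t + a * Real.sin (2 * π * l * t / ε)) ^ 2)) t) :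
    (∀ t ∈ Set.Icc (0 : ℝ) ε,
        |θ t| < |θ 0| + ε * Δ ∧ |θ 0| + ε * Δ < σ) ∧
    (∀ t ≥ ε,
        |θ t| < Real.exp (-δ * (t - ε)) * (|θ 0| + 3 * ε * Δ / 2)
            + ε * Δ * (2 * |a| + σ) / |a| ∧
        Real.exp (-δ * (t - ε)) * (|θ 0| + 3 * ε * Δ / 2)
            + ε * Δ * (2 * |a| + σ) / |a| < σ) :=
  continuous_ES_practical_stability_scalar_general a K l ha hK hl H Hm HM hHm hH Qs QM hQM hQ σ σ0
    εstar δ Δ hδ hΔ hσ0 hσ hΦ ε hε θ hθ0 hode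
end

section
/- Let K, H̄, ΔH be n×n real matrices with ‖ΔH‖ ≤ κ for some κ ≥ 0, let P be a symmetric n×n real matrix with I_n ≤ P ≤ p·I_n for some scalar p ≥ 1, and let δ > 0 and ζ > 0 be such that the block matrix Φ₁ = [[H̄ᵀKᵀP + PKH̄ + 2δP + ζκ²I_n, PK], [KᵀP, −ζI_n]] is negative definite. Then the matrix exponential satisfies ‖exp(t·K(H̄+ΔH))‖ ≤ √p·e^{−δt} for all t ≥ 0, where ‖·‖ denotes the induced matrix 2-norm. -/
/-!
With `A = K (H̄ + ΔH)`, the quadratic form `V x = xᵀ P x` is a Lyapunov function: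
`Aᵀ P + P A + 2δ P ≤ 0`. This follows from the negative definiteness of `Φ₁` by evaluating its
quadratic form at `(x, ΔH x)`, since `‖ΔH x‖² ≤ κ² ‖x‖²` (the S-procedure). Along a trajectory
`u t = exp (t A) v` we then get `V (u t) ≤ e^{-2δt} V v` by Grönwall, and the sandwich
`‖x‖² ≤ V x ≤ p ‖x‖²` turns this into `‖u t‖ ≤ √p e^{-δt} ‖v‖`.
-/

open Real Matrix

/-- The operator norm on matrices induced by the Euclidean vector norm. -/
noncomputable def l2OpNorm {n : ℕ} (A : Matrix (Fin n) (Fin n) ℝ) : ℝ :=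
  ‖Matrix.toEuclideanCLM (𝕜 := ℝ) A‖

open scoped RealInnerProductSpace

theorem le_exp_mul_mul_of_hasDerivAt_le {V V' : ℝ → ℝ} {c t : ℝ}
    (hV : ∀ s, HasDerivAt V (V' s) s) (hV' : ∀ s, V' s ≤ c * V s) (ht : 0 ≤ t) :
    V t ≤ exp (c * t) * V 0 := by
  have := le_gronwallBound_of_liminf_deriv_right_le (f := V) (δ := V 0) (K := c) (ε := 0)
    (a := 0) (b := t) (fun s _ => (hV s).continuousAt.continuousWithinAt)
    (fun s _ _ hr => (hV s).hasDerivWithinAt.liminf_right_slope_le hr) le_rfl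
    (fun s _ => by simpa using hV' s) t ⟨ht, le_rfl⟩
  rwa [gronwallBound_ε0, sub_zero, mul_comm] at this

section Lyapunov

variable {E : Type*} [NormedAddCommGroup E] [InnerProductSpace ℝ E] [CompleteSpace E]

theorem inner_exp_smul_apply_le_of_lyapunov (L P : E →L[ℝ] E) {δ t : ℝ}
    (hLP : ∀ x, ⟪x, P (L x)⟫ + ⟪L x, P x⟫ ≤ -(2 * δ) * ⟪x, P x⟫) (ht : 0 ≤ t) (v : E) :
    ⟪NormedSpace.exp (t • L) v, P (NormedSpace.exp (t • L) v)⟫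
      ≤ exp (-(2 * δ) * t) * ⟪v, P v⟫ := by
  set u : ℝ → E := fun s => NormedSpace.exp (s • L) v
  have hu : ∀ s, HasDerivAt u (L (u s)) s := fun s => by
    simpa using (hasDerivAt_exp_smul_const' L s).clm_apply (hasDerivAt_const s v)
  have hV : ∀ s, HasDerivAt (fun s => ⟪u s, P (u s)⟫)
      (⟪u s, P (L (u s))⟫ + ⟪L (u s), P (u s)⟫) s :=
    fun s => (hu s).inner ℝ (P.hasFDerivAt.comp_hasDerivAt s (hu s))
  simpa [u] using le_exp_mul_mul_of_hasDerivAt_le hV (fun s => hLP (u s)) ht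

theorem norm_exp_smul_le_of_lyapunov (L P : E →L[ℝ] E) {δ p t : ℝ}
    (hLP : ∀ x, ⟪x, P (L x)⟫ + ⟪L x, P x⟫ ≤ -(2 * δ) * ⟪x, P x⟫)
    (hP_ge : ∀ x, ‖x‖ ^ 2 ≤ ⟪x, P x⟫) (hP_le : ∀ x, ⟪x, P x⟫ ≤ p * ‖x‖ ^ 2)
    (hp : 0 ≤ p) (ht : 0 ≤ t) :
    ‖NormedSpace.exp (t • L)‖ ≤ √p * exp (-δ * t) := by
  refine ContinuousLinearMap.opNorm_le_bound _ (by positivity) fun v => ?_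
  refine le_of_sq_le_sq ?_ (by positivity)
  calc ‖NormedSpace.exp (t • L) v‖ ^ 2
      ≤ exp (-(2 * δ) * t) * ⟪v, P v⟫ :=
        (hP_ge _).trans (inner_exp_smul_apply_le_of_lyapunov L P hLP ht v)
    _ ≤ exp (-(2 * δ) * t) * (p * ‖v‖ ^ 2) := by gcongr; exact hP_le v
    _ = (√p * exp (-δ * t) * ‖v‖) ^ 2 := by
        rw [mul_pow, mul_pow, sq_sqrt hp, ← exp_nat_mul]; ring_nf

end Lyapunov

namespace Matrix

variable {l m : Type*} [Fintype l] [Fintype m]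

theorem mulVec_dotProduct {R : Type*} [CommSemiring R] (M : Matrix l m R) (v : m → R)
    (w : l → R) : M *ᵥ v ⬝ᵥ w = v ⬝ᵥ Mᵀ *ᵥ w := by
  rw [← vecMul_transpose, ← dotProduct_mulVec]

theorem sumElim_dotProduct_fromBlocks_mulVec {R : Type*} [NonUnitalNonAssocSemiring R]
    (A : Matrix l l R) (B : Matrix l m R) (C : Matrix m l R) (D : Matrix m m R) (x : l → R)
    (y : m → R) :
    Sum.elim x y ⬝ᵥ fromBlocks A B C D *ᵥ Sum.elim x y
      = x ⬝ᵥ A *ᵥ x + x ⬝ᵥ B *ᵥ y + (y ⬝ᵥ C *ᵥ x + y ⬝ᵥ D *ᵥ y) := by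
  simp only [fromBlocks_mulVec, sumElim_dotProduct_sumElim, Sum.elim_comp_inl,
    Sum.elim_comp_inr, dotProduct_add]

variable [DecidableEq m]

theorem toEuclideanCLM_exp {𝕜 : Type*} [RCLike 𝕜] (M : Matrix m m 𝕜) :
    toEuclideanCLM (𝕜 := 𝕜) (NormedSpace.exp M) = NormedSpace.exp (toEuclideanCLM (𝕜 := 𝕜) M) :=
  -- `exp` only depends on the topology, so any submultiplicative matrix norm will do here
  open scoped Norms.Operator in
  NormedSpace.map_exp (toEuclideanCLM (n := m) (𝕜 := 𝕜))
    (toEuclideanCLM (n := m) (𝕜 := 𝕜)).toAlgEquiv.toLinearMap.continuous_of_finiteDimensional M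

theorem PosSemidef.inner_toEuclideanCLM_le {P Q : Matrix m m ℝ} (h : (Q - P).PosSemidef)
    (x : EuclideanSpace ℝ m) :
    ⟪x, toEuclideanCLM (𝕜 := ℝ) P x⟫ ≤ ⟪x, toEuclideanCLM (𝕜 := ℝ) Q x⟫ := by
  have := h.dotProduct_mulVec_nonneg x.ofLp
  rw [star_trivial, sub_mulVec, dotProduct_sub, sub_nonneg] at this
  simpa only [inner_toEuclideanCLM] using this

theorem dotProduct_mulVec_self_le_of_norm_toEuclideanCLM_le {M : Matrix m m ℝ} {κ : ℝ}
    (hM : ‖toEuclideanCLM (𝕜 := ℝ) M‖ ≤ κ) (x : m → ℝ) :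
    M *ᵥ x ⬝ᵥ M *ᵥ x ≤ κ ^ 2 * (x ⬝ᵥ x) := by
  have h := (toEuclideanCLM (𝕜 := ℝ) M).le_of_opNorm_le hM (WithLp.toLp 2 x)
  have h2 := pow_le_pow_left₀ (norm_nonneg _) h 2
  rwa [mul_pow, ← real_inner_self_eq_norm_sq, ← real_inner_self_eq_norm_sq, toEuclideanCLM_toLp,
    EuclideanSpace.inner_toLp_toLp, EuclideanSpace.inner_toLp_toLp, star_trivial,
    star_trivial] at h2

theorem lyapunov_of_fromBlocks_posSemidef {K Hbar ΔH P : Matrix m m ℝ} {κ δ ζ : ℝ}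
    (hζ : 0 ≤ ζ) (hΔH : ∀ x, ΔH *ᵥ x ⬝ᵥ ΔH *ᵥ x ≤ κ ^ 2 * (x ⬝ᵥ x))
    (hΦ : (-fromBlocks (Hbarᵀ * Kᵀ * P + P * K * Hbar + (2 * δ) • P + (ζ * κ ^ 2) • 1)
      (P * K) (Kᵀ * P) (-(ζ • 1))).PosSemidef) (x : m → ℝ) :
    x ⬝ᵥ P *ᵥ (K * (Hbar + ΔH)) *ᵥ x + (K * (Hbar + ΔH)) *ᵥ x ⬝ᵥ P *ᵥ x
      ≤ -(2 * δ) * (x ⬝ᵥ P *ᵥ x) := by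
  set y := ΔH *ᵥ x
  have hblock := hΦ.dotProduct_mulVec_nonneg (Sum.elim x y)
  rw [star_trivial, neg_mulVec, dotProduct_neg, neg_nonneg,
    sumElim_dotProduct_fromBlocks_mulVec] at hblock
  simp only [add_mulVec, dotProduct_add, smul_mulVec, one_mulVec, dotProduct_smul, smul_eq_mul,
    neg_mulVec, dotProduct_neg, ← mulVec_mulVec] at hblock
  have hAx : (K * (Hbar + ΔH)) *ᵥ x = K *ᵥ Hbar *ᵥ x + K *ᵥ y := by
    rw [mul_add, add_mulVec, ← mulVec_mulVec, ← mulVec_mulVec]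
  rw [hAx, mulVec_add, dotProduct_add, add_dotProduct]
  simp only [mulVec_dotProduct]
  have := mul_le_mul_of_nonneg_left (hΔH x) hζ
  linarith

end Matrix

theorem matrix_exp_bound_of_LMI_general
    (n : ℕ)
    (K Hbar ΔH P : Matrix (Fin (n + 1)) (Fin (n + 1)) ℝ)
    (κ p δ ζ : ℝ)
    (hΔH : l2OpNorm ΔH ≤ κ)
    (hp : 1 ≤ p)
    (hP1 : (P - (1 : Matrix (Fin (n + 1)) (Fin (n + 1)) ℝ)).PosSemidef)
    (hP2 : (p • (1 : Matrix (Fin (n + 1)) (Fin (n + 1)) ℝ) - P).PosSemidef)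
    (hζ : 0 < ζ)
    (hΦ1 : (-(Matrix.fromBlocks
        (Hbarᵀ * Kᵀ * P + P * K * Hbar + (2 * δ) • P
          + (ζ * κ ^ 2) • (1 : Matrix (Fin (n + 1)) (Fin (n + 1)) ℝ))
        (P * K) (Kᵀ * P)
        (-(ζ • (1 : Matrix (Fin (n + 1)) (Fin (n + 1)) ℝ))))).PosDef)
    (t : ℝ) (ht : 0 ≤ t) :
    l2OpNorm (NormedSpace.exp (t • (K * (Hbar + ΔH))))
      ≤ Real.sqrt p * Real.exp (-δ * t) := by
  rw [l2OpNorm, toEuclideanCLM_exp, map_smul]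
  refine norm_exp_smul_le_of_lyapunov _ (toEuclideanCLM (𝕜 := ℝ) P) (fun x => ?_) (fun x => ?_)
    (fun x => ?_) (by linarith) ht
  · simpa only [inner_toEuclideanCLM, ofLp_toEuclideanCLM] using
      lyapunov_of_fromBlocks_posSemidef hζ.le
        (dotProduct_mulVec_self_le_of_norm_toEuclideanCLM_le hΔH) hΦ1.posSemidef x.ofLp
  · simpa only [map_one, one_apply_eq_self, real_inner_self_eq_norm_sq] using
      hP1.inner_toEuclideanCLM_le x
  · simpa only [map_smul, map_one, _root_.smul_apply, one_apply_eq_self, inner_smul_right,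
      real_inner_self_eq_norm_sq] using hP2.inner_toEuclideanCLM_le x

/-- LMI-based exponential bound on the matrix exponential. -/
theorem matrix_exp_bound_of_LMI
    (n : ℕ)
    (K Hbar ΔH P : Matrix (Fin (n + 1)) (Fin (n + 1)) ℝ)
    (κ p δ ζ : ℝ)
    (hκ : 0 ≤ κ) (hΔH : l2OpNorm ΔH ≤ κ)
    (hPsymm : P.IsSymm) (hp : 1 ≤ p)
    (hP1 : (P - (1 : Matrix (Fin (n + 1)) (Fin (n + 1)) ℝ)).PosSemidef)
    (hP2 : (p • (1 : Matrix (Fin (n + 1)) (Fin (n + 1)) ℝ) - P).PosSemidef)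
    (hδ : 0 < δ) (hζ : 0 < ζ)
    (hΦ1 : (-(Matrix.fromBlocks
        (Hbarᵀ * Kᵀ * P + P * K * Hbar + (2 * δ) • P
          + (ζ * κ ^ 2) • (1 : Matrix (Fin (n + 1)) (Fin (n + 1)) ℝ))
        (P * K) (Kᵀ * P)
        (-(ζ • (1 : Matrix (Fin (n + 1)) (Fin (n + 1)) ℝ))))).PosDef)
    (t : ℝ) (ht : 0 ≤ t) :
    l2OpNorm (NormedSpace.exp (t • (K * (Hbar + ΔH))))
      ≤ Real.sqrt p * Real.exp (-δ * t) :=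
  matrix_exp_bound_of_LMI_general n K Hbar ΔH P κ p δ ζ hΔH hp hP1 hP2 hζ hΦ1 t ht
end

section
/- Let L, H̄, ΔH be n×n real matrices with ‖ΔH‖ ≤ κ for some κ ≥ 0, let P be a symmetric n×n real matrix with I_n ≤ P ≤ p·I_n for some scalar p ≥ 1, and let λ > 0, ε* > 0 with λε* < 1 and ζ > 0 be such that the block matrix Φ₁ = [[H̄ᵀLᵀP + PLH̄ + ε*H̄ᵀLᵀPLH̄ + 2λP + ζκ²I_n, PL + ε*H̄ᵀLᵀPL], [LᵀP + ε*LᵀPLH̄, −ζI_n + ε*LᵀPL]] is negative definite. Then for every ε ∈ (0, ε*] and every natural number k, ‖(I_n + εL(H̄+ΔH))^k‖ ≤ √p·(1−λε)^k, where ‖·‖ denotes the induced matrix 2-norm. -/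
/-!
`V x = xᵀ P x` is a Lyapunov function for the Euler iteration `x ↦ (I + ε L (H̄ + ΔH)) x`.
Testing the LMI on `(x, ΔH x)` and discarding the `ζ`-terms, which are nonnegative because
`‖ΔH x‖ ≤ κ ‖x‖`, gives `2 xᵀ P M x + ε⋆ V(M x) ≤ -2λ V x` for `M = L (H̄ + ΔH)`; for `ε ≤ ε⋆` this
makes one step contract `V` by `1 - 2λε ≤ (1 - λε)²`. Iterating, and comparing `V` with `‖·‖²`
through `I ≤ P ≤ p I`, bounds `‖(I + ε M)ᵏ x‖²` by `p (1 - λε)²ᵏ ‖x‖²`.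
-/

open Real Matrix

section QuadraticForm

variable {ι : Type*} [Fintype ι]

theorem dotProduct_transpose_mulVec' {ι' : Type*} [Fintype ι'] (B : Matrix ι' ι ℝ) (x : ι → ℝ)
    (u : ι' → ℝ) : x ⬝ᵥ (Bᵀ *ᵥ u) = (B *ᵥ x) ⬝ᵥ u := by
  rw [dotProduct_mulVec, vecMul_transpose]

theorem dotProduct_self_le_dotProduct_mulVec [DecidableEq ι] {P : Matrix ι ι ℝ}
    (hP : (P - 1).PosSemidef) (x : ι → ℝ) : x ⬝ᵥ x ≤ x ⬝ᵥ (P *ᵥ x) := by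
  have := hP.dotProduct_mulVec_nonneg x
  simp only [sub_mulVec, one_mulVec, dotProduct_sub, star_trivial] at this
  linarith

theorem dotProduct_mulVec_le_smul_dotProduct_self [DecidableEq ι] {P : Matrix ι ι ℝ} {c : ℝ}
    (hP : (c • 1 - P).PosSemidef) (x : ι → ℝ) : x ⬝ᵥ (P *ᵥ x) ≤ c * (x ⬝ᵥ x) := by
  have := hP.dotProduct_mulVec_nonneg x
  simp only [sub_mulVec, smul_mulVec, one_mulVec, dotProduct_sub, dotProduct_smul, smul_eq_mul,
    star_trivial] at this
  linarith

theorem dotProduct_pow_mulVec_le [DecidableEq ι] {A P : Matrix ι ι ℝ} {c : ℝ} (hc : 0 ≤ c)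
    (hA : ∀ x, (A *ᵥ x) ⬝ᵥ (P *ᵥ (A *ᵥ x)) ≤ c * (x ⬝ᵥ (P *ᵥ x))) (k : ℕ) (x : ι → ℝ) :
    (A ^ k *ᵥ x) ⬝ᵥ (P *ᵥ (A ^ k *ᵥ x)) ≤ c ^ k * (x ⬝ᵥ (P *ᵥ x)) := by
  induction k generalizing x with
  | zero => simp
  | succ k ih =>
    calc (A ^ (k + 1) *ᵥ x) ⬝ᵥ (P *ᵥ (A ^ (k + 1) *ᵥ x))
        ≤ c ^ k * ((A *ᵥ x) ⬝ᵥ (P *ᵥ (A *ᵥ x))) := by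
          rw [pow_succ, ← mulVec_mulVec]; exact ih _
      _ ≤ c ^ k * (c * (x ⬝ᵥ (P *ᵥ x))) := by gcongr; exact hA x
      _ = c ^ (k + 1) * (x ⬝ᵥ (P *ᵥ x)) := by ring

theorem dotProduct_mulVec_add_smul (P : Matrix ι ι ℝ) (x y : ι → ℝ) (ε : ℝ) :
    (x + ε • y) ⬝ᵥ (P *ᵥ (x + ε • y)) = x ⬝ᵥ (P *ᵥ x)
      + ε * (x ⬝ᵥ (P *ᵥ y) + y ⬝ᵥ (P *ᵥ x)) + ε ^ 2 * (y ⬝ᵥ (P *ᵥ y)) := by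
  simp only [mulVec_add, mulVec_smul, dotProduct_add, add_dotProduct, dotProduct_smul,
    smul_dotProduct, smul_eq_mul]
  ring

/-- `hdecay` is the continuous-time estimate `dV(x)[y] ≤ -2λ V x` for `V x = x ⬝ᵥ P *ᵥ x`, with a
margin `ε⋆ V y` that absorbs the second-order term `ε² V y` of the Euler step. -/
theorem dotProduct_mulVec_add_smul_le {P : Matrix ι ι ℝ} (hP : P.PosSemidef)
    {x y : ι → ℝ} {lam εstar ε : ℝ} (hε0 : 0 ≤ ε) (hε : ε ≤ εstar)
    (hdecay : x ⬝ᵥ (P *ᵥ y) + y ⬝ᵥ (P *ᵥ x) + εstar * (y ⬝ᵥ (P *ᵥ y))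
      + 2 * lam * (x ⬝ᵥ (P *ᵥ x)) ≤ 0) :
    (x + ε • y) ⬝ᵥ (P *ᵥ (x + ε • y)) ≤ (1 - lam * ε) ^ 2 * (x ⬝ᵥ (P *ᵥ x)) := by
  have hVx := hP.dotProduct_mulVec_nonneg x
  have hVy := hP.dotProduct_mulVec_nonneg y
  rw [star_trivial] at hVx hVy
  rw [dotProduct_mulVec_add_smul]
  nlinarith [mul_le_mul_of_nonneg_left hdecay hε0,
    mul_nonneg (mul_nonneg hε0 (sub_nonneg.2 hε)) hVy, mul_nonneg (sq_nonneg (lam * ε)) hVx]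

end QuadraticForm

section L2OpNorm

variable {m : ℕ}

theorem EuclideanSpace.norm_toLp_sq {ι : Type*} [Fintype ι] (x : ι → ℝ) :
    ‖WithLp.toLp 2 x‖ ^ 2 = x ⬝ᵥ x := by
  rw [← real_inner_self_eq_norm_sq, EuclideanSpace.inner_toLp_toLp, star_trivial]

theorem dotProduct_mulVec_self_le_of_l2OpNorm_le {B : Matrix (Fin m) (Fin m) ℝ} {C : ℝ}
    (hB : l2OpNorm B ≤ C) (x : Fin m → ℝ) : (B *ᵥ x) ⬝ᵥ (B *ᵥ x) ≤ C ^ 2 * (x ⬝ᵥ x) := by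
  have hle : ‖WithLp.toLp 2 (B *ᵥ x)‖ ≤ C * ‖WithLp.toLp 2 x‖ :=
    ((toEuclideanCLM (𝕜 := ℝ) B).le_opNorm (WithLp.toLp 2 x)).trans
      (mul_le_mul_of_nonneg_right hB (norm_nonneg _))
  rw [← EuclideanSpace.norm_toLp_sq, ← EuclideanSpace.norm_toLp_sq, ← mul_pow]
  exact pow_le_pow_left₀ (norm_nonneg _) hle 2

theorem l2OpNorm_le_of_dotProduct_mulVec_self_le {B : Matrix (Fin m) (Fin m) ℝ} {C : ℝ}
    (hC : 0 ≤ C) (hB : ∀ x, (B *ᵥ x) ⬝ᵥ (B *ᵥ x) ≤ C ^ 2 * (x ⬝ᵥ x)) : l2OpNorm B ≤ C := by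
  refine ContinuousLinearMap.opNorm_le_bound _ hC fun x => ?_
  have hsq := hB x.ofLp
  rw [← EuclideanSpace.norm_toLp_sq, ← EuclideanSpace.norm_toLp_sq, ← mul_pow] at hsq
  exact (pow_le_pow_iff_left₀ (norm_nonneg _) (by positivity) two_ne_zero).1 hsq

end L2OpNorm

section LMI

variable {ι : Type*} [Fintype ι] [DecidableEq ι]

/-- The block matrix `Φ₁` of the LMI. -/
def lmiBlockMatrix (L Hbar P : Matrix ι ι ℝ) (κ lam εstar ζ : ℝ) : Matrix (ι ⊕ ι) (ι ⊕ ι) ℝ :=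
  fromBlocks
    (Hbarᵀ * Lᵀ * P + P * L * Hbar + εstar • (Hbarᵀ * Lᵀ * P * L * Hbar)
      + (2 * lam) • P + (ζ * κ ^ 2) • (1 : Matrix ι ι ℝ))
    (P * L + εstar • (Hbarᵀ * Lᵀ * P * L))
    (Lᵀ * P + εstar • (Lᵀ * P * L * Hbar))
    (-(ζ • (1 : Matrix ι ι ℝ)) + εstar • (Lᵀ * P * L))

theorem sumElim_dotProduct_lmiBlockMatrix_mulVec (L Hbar P : Matrix ι ι ℝ)
    (κ lam εstar ζ : ℝ) (x w : ι → ℝ) {y : ι → ℝ} (hy : L *ᵥ (Hbar *ᵥ x + w) = y) :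
    Sum.elim x w ⬝ᵥ (lmiBlockMatrix L Hbar P κ lam εstar ζ *ᵥ Sum.elim x w)
      = x ⬝ᵥ (P *ᵥ y) + y ⬝ᵥ (P *ᵥ x) + εstar * (y ⬝ᵥ (P *ᵥ y))
        + 2 * lam * (x ⬝ᵥ (P *ᵥ x)) + ζ * (κ ^ 2 * (x ⬝ᵥ x) - w ⬝ᵥ w) := by
  subst hy
  simp only [lmiBlockMatrix, fromBlocks_mulVec, Sum.elim_comp_inl, Sum.elim_comp_inr,
    sumElim_dotProduct_sumElim, add_mulVec, neg_mulVec, smul_mulVec, one_mulVec, ← mulVec_mulVec,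
    mulVec_add, dotProduct_transpose_mulVec', dotProduct_add, add_dotProduct, dotProduct_smul,
    dotProduct_neg, smul_eq_mul]
  ring

/-- S-procedure: under `‖w‖ ≤ κ ‖x‖` the `ζ`-terms of the LMI are nonnegative and can be dropped. -/
theorem lmi_decay {L Hbar P : Matrix ι ι ℝ} {κ lam εstar ζ : ℝ}
    (hΦ : (-lmiBlockMatrix L Hbar P κ lam εstar ζ).PosSemidef) (hζ : 0 ≤ ζ) {x w : ι → ℝ}
    (hw : w ⬝ᵥ w ≤ κ ^ 2 * (x ⬝ᵥ x)) {y : ι → ℝ} (hy : L *ᵥ (Hbar *ᵥ x + w) = y) :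
    x ⬝ᵥ (P *ᵥ y) + y ⬝ᵥ (P *ᵥ x) + εstar * (y ⬝ᵥ (P *ᵥ y)) + 2 * lam * (x ⬝ᵥ (P *ᵥ x)) ≤ 0 := by
  have hneg := hΦ.dotProduct_mulVec_nonneg (Sum.elim x w)
  rw [star_trivial, neg_mulVec, dotProduct_neg,
    sumElim_dotProduct_lmiBlockMatrix_mulVec L Hbar P κ lam εstar ζ x w hy] at hneg
  nlinarith [mul_nonneg hζ (sub_nonneg.2 hw)]

theorem dotProduct_mulVec_one_add_smul_le {L Hbar ΔH P : Matrix ι ι ℝ} {κ lam εstar ζ ε : ℝ}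
    (hP : P.PosSemidef) (hΦ : (-lmiBlockMatrix L Hbar P κ lam εstar ζ).PosSemidef) (hζ : 0 ≤ ζ)
    (hΔH : ∀ x, (ΔH *ᵥ x) ⬝ᵥ (ΔH *ᵥ x) ≤ κ ^ 2 * (x ⬝ᵥ x)) (hε0 : 0 ≤ ε) (hε : ε ≤ εstar)
    (x : ι → ℝ) :
    ((1 + ε • (L * (Hbar + ΔH))) *ᵥ x) ⬝ᵥ (P *ᵥ ((1 + ε • (L * (Hbar + ΔH))) *ᵥ x))
      ≤ (1 - lam * ε) ^ 2 * (x ⬝ᵥ (P *ᵥ x)) := by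
  have hstep : (1 + ε • (L * (Hbar + ΔH))) *ᵥ x = x + ε • (L *ᵥ (Hbar *ᵥ x + ΔH *ᵥ x)) := by
    rw [add_mulVec, one_mulVec, smul_mulVec, ← mulVec_mulVec, add_mulVec]
  rw [hstep]
  exact dotProduct_mulVec_add_smul_le hP hε0 hε (lmi_decay hΦ hζ (hΔH x) rfl)

end LMI

theorem matrix_pow_bound_of_LMI_general
    (n : ℕ)
    (L Hbar ΔH P : Matrix (Fin (n + 1)) (Fin (n + 1)) ℝ)
    (κ p lam εstar ζ : ℝ)
    (hΔH : l2OpNorm ΔH ≤ κ)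
    (hp : 1 ≤ p)
    (hP1 : (P - (1 : Matrix (Fin (n + 1)) (Fin (n + 1)) ℝ)).PosSemidef)
    (hP2 : (p • (1 : Matrix (Fin (n + 1)) (Fin (n + 1)) ℝ) - P).PosSemidef)
    (hlam : 0 < lam) (hlamε : lam * εstar < 1) (hζ : 0 < ζ)
    (hΦ1 : (-(Matrix.fromBlocks
        (Hbarᵀ * Lᵀ * P + P * L * Hbar + εstar • (Hbarᵀ * Lᵀ * P * L * Hbar)
          + (2 * lam) • P + (ζ * κ ^ 2) • (1 : Matrix (Fin (n + 1)) (Fin (n + 1)) ℝ))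
        (P * L + εstar • (Hbarᵀ * Lᵀ * P * L))
        (Lᵀ * P + εstar • (Lᵀ * P * L * Hbar))
        (-(ζ • (1 : Matrix (Fin (n + 1)) (Fin (n + 1)) ℝ)) + εstar • (Lᵀ * P * L)))).PosDef)
    (ε : ℝ) (hε : ε ∈ Set.Ioc 0 εstar) (k : ℕ) :
    l2OpNorm (((1 : Matrix (Fin (n + 1)) (Fin (n + 1)) ℝ) + ε • (L * (Hbar + ΔH))) ^ k)
      ≤ Real.sqrt p * (1 - lam * ε) ^ k := by
  obtain ⟨hε0, hεle⟩ := hε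
  have hP : P.PosSemidef := by simpa using hP1.add PosSemidef.one
  have hrate : 0 ≤ 1 - lam * ε := by nlinarith
  have hstep := dotProduct_mulVec_one_add_smul_le hP hΦ1.posSemidef hζ.le
    (dotProduct_mulVec_self_le_of_l2OpNorm_le hΔH) hε0.le hεle
  refine l2OpNorm_le_of_dotProduct_mulVec_self_le (by positivity) fun x => ?_
  calc _ ≤ _ := dotProduct_self_le_dotProduct_mulVec hP1 _
    _ ≤ ((1 - lam * ε) ^ 2) ^ k * (x ⬝ᵥ (P *ᵥ x)) :=
      dotProduct_pow_mulVec_le (by positivity) hstep k x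
    _ ≤ ((1 - lam * ε) ^ 2) ^ k * (p * (x ⬝ᵥ x)) := by
      gcongr; exact dotProduct_mulVec_le_smul_dotProduct_self hP2 x
    _ = (√p * (1 - lam * ε) ^ k) ^ 2 * (x ⬝ᵥ x) := by
      rw [mul_pow, sq_sqrt (by linarith), ← pow_mul, ← pow_mul, mul_comm 2 k]; ring

/-- LMI-based exponential bound on matrix powers. -/
theorem matrix_pow_bound_of_LMI
    (n : ℕ)
    (L Hbar ΔH P : Matrix (Fin (n + 1)) (Fin (n + 1)) ℝ)
    (κ p lam εstar ζ : ℝ)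
    (hκ : 0 ≤ κ) (hΔH : l2OpNorm ΔH ≤ κ)
    (hPsymm : P.IsSymm) (hp : 1 ≤ p)
    (hP1 : (P - (1 : Matrix (Fin (n + 1)) (Fin (n + 1)) ℝ)).PosSemidef)
    (hP2 : (p • (1 : Matrix (Fin (n + 1)) (Fin (n + 1)) ℝ) - P).PosSemidef)
    (hlam : 0 < lam) (hεstar : 0 < εstar) (hlamε : lam * εstar < 1) (hζ : 0 < ζ)
    (hΦ1 : (-(Matrix.fromBlocks
        (Hbarᵀ * Lᵀ * P + P * L * Hbar + εstar • (Hbarᵀ * Lᵀ * P * L * Hbar)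
          + (2 * lam) • P + (ζ * κ ^ 2) • (1 : Matrix (Fin (n + 1)) (Fin (n + 1)) ℝ))
        (P * L + εstar • (Hbarᵀ * Lᵀ * P * L))
        (Lᵀ * P + εstar • (Lᵀ * P * L * Hbar))
        (-(ζ • (1 : Matrix (Fin (n + 1)) (Fin (n + 1)) ℝ)) + εstar • (Lᵀ * P * L)))).PosDef)
    (ε : ℝ) (hε : ε ∈ Set.Ioc 0 εstar) (k : ℕ) :
    l2OpNorm (((1 : Matrix (Fin (n + 1)) (Fin (n + 1)) ℝ) + ε • (L * (Hbar + ΔH))) ^ k)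
      ≤ Real.sqrt p * (1 - lam * ε) ^ k :=
  matrix_pow_bound_of_LMI_general n L Hbar ΔH P κ p lam εstar ζ hΔH hp hP1 hP2 hlam hlamε hζ hΦ1 ε
    hε k
end
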